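/- arXiv:math/0407423 — 3 statements merged into one kernel-verified Lean document; each statement's English description precedes it below -/
import Mathlib

section
/- Let G be a finite (additively written) abelian group of order v and let D be a k-element subset of G such that −D = D and 0 ∉ D, and let λ, μ be integers with (λ−μ)² + 4(k−μ) ≥ 0. Then D is a (v,k,λ,μ)-partial difference set in G if and only if for every nontrivial additive character χ : G → ℂˣ the sum Σ_{d∈D} χ(d) equals ((λ−μ) + √((λ−μ)²+4(k−μ)))/2 or ((λ−μ) − √((λ−μ)²+4(k−μ)))/2 (while the trivial character gives Σ_{d∈D} χ(d) = k). -/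
/-!
For symmetric `D`, `(∑ d ∈ D, χ d) ^ 2 = ∑ g, N g * χ g`, where `N g` counts the pairs of elements
of `D` with difference `g`; and `D` is a PDS exactly when `N = M`, where `M` takes the value `k`
at `0`, `λ` on `D` and `μ` elsewhere. For nontrivial `χ` the transform of `M` is
`(λ - μ) S + (k - μ)` with `S = ∑ d ∈ D, χ d`, so the transform of `N - M` vanishes at `χ` iff
`S ^ 2 = (λ - μ) S + (k - μ)`, i.e. iff `S` is one of the two stated roots. A function whose
transform vanishes at every nontrivial character is constant, and `N - M` vanishes at `0`.
-/

/-- `D` is a `(v,k,λ,μ)`-partial difference set in the (additively written) group `G`: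
`G` has order `v`, `D` has `k` elements, every nonzero element of `D` arises exactly `lam`
times as a difference `d₁ - d₂` of distinct elements of `D`, and every nonzero element
outside `D` arises exactly `mu` times. -/
def IsPDS {G : Type*} [AddCommGroup G] (D : Set G) (v k : ℕ) (lam mu : ℤ) : Prop :=
  Nat.card G = v ∧ Nat.card D = k ∧
  (∀ g ∈ D, g ≠ 0 →
    (Nat.card {p : G × G // p.1 ∈ D ∧ p.2 ∈ D ∧ p.1 ≠ p.2 ∧ p.1 - p.2 = g} : ℤ) = lam) ∧
  (∀ g : G, g ∉ D → g ≠ 0 →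
    (Nat.card {p : G × G // p.1 ∈ D ∧ p.2 ∈ D ∧ p.1 ≠ p.2 ∧ p.1 - p.2 = g} : ℤ) = mu)

open Finset

section Fourier

variable {G : Type*} [AddCommGroup G] [Fintype G]

theorem AddChar.card_mul_apply_eq_sum_of_sum_mul_eq_zero {f : G → ℂ}
    (hf : ∀ ψ : AddChar G ℂ, ψ ≠ 1 → ∑ g, f g * ψ g = 0) (a : G) :
    Fintype.card G * f a = ∑ g, f g := by
  classical
  calc Fintype.card G * f a
      = ∑ g, f g * ∑ ψ : AddChar G ℂ, ψ (g - a) := by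
        simp_rw [AddChar.sum_apply_eq_ite, sub_eq_zero, mul_ite, mul_zero, sum_ite_eq',
          mem_univ, if_true, mul_comm]
    _ = ∑ ψ : AddChar G ℂ, (∑ g, f g * ψ g) * ψ (-a) := by
        simp_rw [mul_sum, sum_mul, mul_assoc, ← AddChar.map_add_eq_mul, ← sub_eq_add_neg]
        exact sum_comm
    _ = ∑ g, f g := by
        rw [sum_eq_single_of_mem 1 (mem_univ _) fun ψ _ hψ => by rw [hf ψ hψ, zero_mul]]
        simp

theorem AddChar.apply_eq_apply_of_sum_mul_eq_zero {f : G → ℂ}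
    (hf : ∀ ψ : AddChar G ℂ, ψ ≠ 1 → ∑ g, f g * ψ g = 0) (a b : G) : f a = f b :=
  mul_left_cancel₀ (Nat.cast_ne_zero.2 Fintype.card_ne_zero)
    ((card_mul_apply_eq_sum_of_sum_mul_eq_zero hf a).trans
      (card_mul_apply_eq_sum_of_sum_mul_eq_zero hf b).symm)

end Fourier

section DifferenceCount

open scoped Pointwise

variable {G : Type*} [AddCommGroup G] [DecidableEq G]

def diffCount (D : Finset G) (g : G) : ℕ := #{p ∈ D ×ˢ D | p.1 - p.2 = g}

theorem diffCount_zero (D : Finset G) : diffCount D 0 = #D := by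
  rw [diffCount, ← card_image_of_injective D (f := fun d => (d, d))
    fun a b h => (Prod.ext_iff.mp h).1]
  congr 1
  ext ⟨a, b⟩
  simp only [mem_filter, mem_product, mem_image, sub_eq_zero, Prod.mk.injEq]
  constructor
  · rintro ⟨⟨ha, -⟩, rfl⟩
    exact ⟨a, ha, rfl, rfl⟩
  · rintro ⟨d, hd, rfl, rfl⟩
    exact ⟨⟨hd, hd⟩, rfl⟩

theorem natCard_pairs_sub_eq_diffCount {D : Finset G} {g : G} (hg : g ≠ 0) :
    Nat.card {p : G × G // p.1 ∈ (D : Set G) ∧ p.2 ∈ (D : Set G) ∧ p.1 ≠ p.2 ∧ p.1 - p.2 = g}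
      = diffCount D g := by
  rw [diffCount, ← Nat.card_eq_finsetCard]
  refine Nat.card_congr (Equiv.subtypeEquivRight fun p => ?_)
  simp only [mem_coe, mem_filter, mem_product]
  constructor
  · rintro ⟨h1, h2, -, h3⟩
    exact ⟨⟨h1, h2⟩, h3⟩
  · rintro ⟨⟨h1, h2⟩, h3⟩
    exact ⟨h1, h2, fun h => hg (by rw [← h3, h, sub_self]), h3⟩

theorem sum_mul_sum_neg_eq_sum_diffCount [Fintype G] {R : Type*} [CommRing R]
    (ψ : AddChar G R) (D : Finset G) :
    (∑ d ∈ D, ψ d) * ∑ d ∈ D, ψ (-d) = ∑ g, (diffCount D g : R) * ψ g := by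
  rw [sum_mul_sum, ← sum_product']
  simp_rw [← AddChar.map_add_eq_mul, ← sub_eq_add_neg]
  rw [← sum_fiberwise' (D ×ˢ D) (fun p => p.1 - p.2) (fun g => ψ g)]
  simp_rw [sum_const, nsmul_eq_mul, diffCount]

theorem sq_sum_eq_sum_diffCount_of_neg_eq [Fintype G] {R : Type*} [CommRing R]
    (ψ : AddChar G R) {D : Finset G} (hD : -D = D) :
    (∑ d ∈ D, ψ d) ^ 2 = ∑ g, (diffCount D g : R) * ψ g := by
  rw [← sum_mul_sum_neg_eq_sum_diffCount, ← sum_neg_index, hD, sq]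

/-- The value `k` at `0` accounts for the diagonal pairs, which `diffCount` includes. -/
def pdsDiffCount (D : Finset G) (k : ℕ) (lam mu : ℤ) (g : G) : ℤ :=
  if g = 0 then k else if g ∈ D then lam else mu

theorem isPDS_coe_iff {D : Finset G} {v k : ℕ} {lam mu : ℤ} (hv : Nat.card G = v) (hk : #D = k) :
    IsPDS (D : Set G) v k lam mu ↔ ∀ g, (diffCount D g : ℤ) = pdsDiffCount D k lam mu g := by
  have hkD : Nat.card (D : Set G) = k := by rw [Nat.card_coe_set_eq, Set.ncard_coe_finset, hk]
  simp only [IsPDS, hv, hkD, true_and]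
  constructor
  · rintro ⟨hlam, hmu⟩ g
    by_cases hg : g = 0
    · simp [pdsDiffCount, hg, diffCount_zero, hk]
    by_cases hgD : g ∈ D
    · rw [← natCard_pairs_sub_eq_diffCount hg, hlam g hgD hg]
      simp [pdsDiffCount, hg, hgD]
    · rw [← natCard_pairs_sub_eq_diffCount hg, hmu g hgD hg]
      simp [pdsDiffCount, hg, hgD]
  · intro h
    refine ⟨fun g hgD hg => ?_, fun g hgD hg => ?_⟩
    · rw [natCard_pairs_sub_eq_diffCount hg, h g]
      simp [pdsDiffCount, hg, mem_coe.1 hgD]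
    · rw [natCard_pairs_sub_eq_diffCount hg, h g]
      simp [pdsDiffCount, hg, mt mem_coe.2 hgD]

variable [Fintype G] {R : Type*} [CommRing R] [IsDomain R] {ψ : AddChar G R} {D : Finset G}

theorem sum_pdsDiffCount_mul (hψ : ψ ≠ 1) (h0 : (0 : G) ∉ D) (k : ℕ) (lam mu : ℤ) :
    ∑ g, (pdsDiffCount D k lam mu g : R) * ψ g = (k - mu) + (lam - mu) * ∑ d ∈ D, ψ d := by
  have hpt : ∀ g, (pdsDiffCount D k lam mu g : R) * ψ g
      = (if g = 0 then ((k : R) - mu) else 0) + (if g ∈ D then (lam - mu) * ψ g else 0)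
        + mu * ψ g := by
    intro g
    by_cases hg : g = 0
    · subst hg
      simp [pdsDiffCount, h0]
    by_cases hgD : g ∈ D <;> simp [pdsDiffCount, hg, hgD]; ring
  simp_rw [hpt, sum_add_distrib, ← mul_sum, AddChar.sum_eq_zero_of_ne_one hψ, sum_ite_eq',
    sum_ite_mem, univ_inter, mem_univ, if_true, mul_sum]
  ring

theorem sum_diffCount_sub_pdsDiffCount_mul (hψ : ψ ≠ 1) (hD : -D = D) (h0 : (0 : G) ∉ D)
    (k : ℕ) (lam mu : ℤ) :
    ∑ g, ((diffCount D g : R) - pdsDiffCount D k lam mu g) * ψ g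
      = (∑ d ∈ D, ψ d) ^ 2 - ((lam - mu) * ∑ d ∈ D, ψ d + (k - mu)) := by
  simp_rw [sub_mul, sum_sub_distrib, sq_sum_eq_sum_diffCount_of_neg_eq ψ hD,
    sum_pdsDiffCount_mul hψ h0]
  ring

end DifferenceCount

theorem sq_eq_mul_add_iff_of_sq_eq {a b s : ℝ} (hs : s ^ 2 = a ^ 2 + 4 * b) (z : ℂ) :
    z ^ 2 = a * z + b ↔ z = ((a + s) / 2 : ℝ) ∨ z = ((a - s) / 2 : ℝ) := by
  have hsC : (s : ℂ) ^ 2 = a ^ 2 + 4 * b := by exact_mod_cast hs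
  have hfac : z ^ 2 - (a * z + b) = (z - ((a + s) / 2 : ℝ)) * (z - ((a - s) / 2 : ℝ)) := by
    push_cast
    linear_combination (1 / 4 : ℂ) * hsC
  rw [← sub_eq_zero, hfac, mul_eq_zero, sub_eq_zero, sub_eq_zero]

theorem stmt0 {G : Type*} [AddCommGroup G] [Finite G] (v k : ℕ) (lam mu : ℤ)
    (D : Set G) (hv : Nat.card G = v) (hk : Nat.card D = k)
    (hsym : -D = D) (h0 : (0 : G) ∉ D)
    (hdisc : (0 : ℤ) ≤ (lam - mu) ^ 2 + 4 * ((k : ℤ) - mu)) :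
    IsPDS D v k lam mu ↔
      ∀ χ : AddChar G ℂ,
        (χ = 1 → ∑ᶠ d ∈ D, χ d = (k : ℂ)) ∧
        (χ ≠ 1 →
          ∑ᶠ d ∈ D, χ d =
            ((((lam : ℝ) - mu) + Real.sqrt (((lam - mu) ^ 2 + 4 * ((k : ℤ) - mu) : ℤ) : ℝ)) / 2 : ℝ) ∨
          ∑ᶠ d ∈ D, χ d =
            ((((lam : ℝ) - mu) - Real.sqrt (((lam - mu) ^ 2 + 4 * ((k : ℤ) - mu) : ℤ) : ℝ)) / 2 : ℝ)) := by
  classical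
  cases nonempty_fintype G
  obtain ⟨D, rfl⟩ := D.toFinite.exists_finset_coe
  have hkD : #D = k := by rwa [Nat.card_coe_set_eq, Set.ncard_coe_finset] at hk
  open scoped Pointwise in
  have hD : -D = D := by exact_mod_cast hsym
  rw [mem_coe] at h0
  have hsqrt : √(((lam - mu) ^ 2 + 4 * ((k : ℤ) - mu) : ℤ) : ℝ) ^ 2
      = ((lam : ℝ) - mu) ^ 2 + 4 * ((k : ℝ) - mu) := by
    rw [Real.sq_sqrt (by exact_mod_cast hdisc)]
    push_cast
    ring
  have hdiff_eq_zero : ∀ g, (diffCount D g : ℂ) - pdsDiffCount D k lam mu g = 0 ↔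
      (diffCount D g : ℤ) = pdsDiffCount D k lam mu g := fun g => by
    rw [sub_eq_zero]
    exact_mod_cast Iff.rfl
  simp_rw [finsum_mem_coe_finset, isPDS_coe_iff hv hkD, ← hdiff_eq_zero,
    ← sq_eq_mul_add_iff_of_sq_eq hsqrt, ← sub_eq_zero (a := (_ : ℂ) ^ 2)]
  push_cast
  constructor
  · intro h χ
    refine ⟨fun hχ => by simp [hχ, hkD], fun hχ => ?_⟩
    rw [← sum_diffCount_sub_pdsDiffCount_mul hχ hD h0]
    simp [h]
  · intro h g
    rw [AddChar.apply_eq_apply_of_sum_mul_eq_zero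
      (f := fun g => (diffCount D g : ℂ) - pdsDiffCount D k lam mu g) (fun χ hχ => by
        rw [sum_diffCount_sub_pdsDiffCount_mul hχ hD h0]
        exact (h χ).2 hχ) g 0]
    simp [pdsDiffCount, diffCount_zero, hkD]
end

section
/- Let ℓ ≥ 1 and 1 ≤ j ≤ ℓ, and define Q'_{ℓ,j} : 𝔽₄^{2ℓ−1} → 𝔽₄ by Q'_{ℓ,j}(x₂, x₃, …, x_{2ℓ}) = Q_{ℓ,j}(0, x₂, x₃, …, x_{2ℓ}). Then Q'_{ℓ,j} is a nonsingular (parabolic) quadratic form in 2ℓ−1 indeterminates: if w ∈ 𝔽₄^{2ℓ−1} satisfies Q'_{ℓ,j}(w) = 0 and B'(w,v) = 0 for all v ∈ 𝔽₄^{2ℓ−1}, where B'(u,v) = Q'_{ℓ,j}(u+v) − Q'_{ℓ,j}(u) − Q'_{ℓ,j}(v) is the polar form, then w = 0. -/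
/-!
In characteristic 2 the polar form of `Q_{ℓ,j}` is the symplectic form
`Σᵢ (x_{2i-1} y_{2i} + x_{2i} y_{2i-1})`, whatever `α` and `j` are. Pairing `w` against the
coordinate vectors of the hyperplane `x₁ = 0` therefore kills every coordinate of `(0, w)` except
`x₂`, and then `Q'(w) = x₂²` because the first pair is the anisotropic one (`j ≥ 1`).
-/

/-- The quadratic form `Q_{ℓ,j}(x₁,…,x_{2ℓ}) = Σ_{i=1}^{j} (α x_{2i-1}² + x_{2i-1}x_{2i} + x_{2i}²)
+ Σ_{i=j+1}^{ℓ} x_{2i-1}x_{2i}`  (coordinates are 0-indexed in Lean). -/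
def Qform {F4 : Type*} [Field F4] (α : F4) (ℓ j : ℕ) (x : Fin (2 * ℓ) → F4) : F4 :=
  ∑ i : Fin ℓ,
    (let a := x ⟨2 * i.val, by have := i.isLt; omega⟩
     let b := x ⟨2 * i.val + 1, by have := i.isLt; omega⟩
     if i.val < j then α * a ^ 2 + a * b + b ^ 2 else a * b)

open QuadraticMap

theorem charP_two_of_card_eq_two_pow {F : Type*} [Field F] [Fintype F] {n : ℕ}
    (hcard : Fintype.card F = 2 ^ (n + 1)) : CharP F 2 := by
  have hpow : (2 : F) ^ (n + 1) = 0 := by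
    exact_mod_cast hcard ▸ FiniteField.cast_card_eq_zero F
  exact CharTwo.of_one_ne_zero_of_two_eq_zero one_ne_zero
    (pow_eq_zero_iff n.succ_ne_zero |>.mp hpow)

section PrependZero

variable {M : Type*} {n : ℕ}

def prependZero [Zero M] (w : Fin (n - 1) → M) (i : Fin n) : M :=
  if h : i.val = 0 then 0 else w ⟨i.val - 1, by have := i.isLt; omega⟩

theorem prependZero_add [AddZeroClass M] (u v : Fin (n - 1) → M) :
    prependZero (u + v) = prependZero u + prependZero v := by
  funext i
  by_cases h : i.val = 0 <;> simp [prependZero, h]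

theorem prependZero_apply_succ [Zero M] (w : Fin (n - 1) → M) (k : Fin (n - 1)) :
    prependZero w ⟨k.val + 1, by omega⟩ = w k := by
  simp [prependZero]

theorem prependZero_eq_zero [Zero M] {w : Fin (n - 1) → M} (hw : prependZero w = 0) : w = 0 := by
  funext k
  rw [← prependZero_apply_succ w k, hw, Pi.zero_apply, Pi.zero_apply]

theorem exists_prependZero_eq [Zero M] {y : Fin n → M}
    (hy : ∀ i : Fin n, i.val = 0 → y i = 0) :
    ∃ v : Fin (n - 1) → M, prependZero v = y := by
  refine ⟨fun k => y ⟨k.val + 1, by omega⟩, funext fun i => ?_⟩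
  unfold prependZero
  split_ifs with h
  · exact (hy i h).symm
  · exact congrArg y (Fin.ext (Nat.sub_add_cancel (Nat.pos_of_ne_zero h)))

end PrependZero

namespace Qform

variable {F : Type*} [Field F] (α : F) {ℓ : ℕ} (j : ℕ)

def fst (i : Fin ℓ) : Fin (2 * ℓ) := ⟨2 * i.val, by have := i.isLt; omega⟩

def snd (i : Fin ℓ) : Fin (2 * ℓ) := ⟨2 * i.val + 1, by have := i.isLt; omega⟩

@[simp] theorem fst_val (i : Fin ℓ) : (fst i).val = 2 * i.val := rfl

@[simp] theorem snd_val (i : Fin ℓ) : (snd i).val = 2 * i.val + 1 := rfl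

theorem fst_eq_fst_iff {i i' : Fin ℓ} : fst i = fst i' ↔ i = i' := by
  simp [Fin.ext_iff]

theorem snd_eq_snd_iff {i i' : Fin ℓ} : snd i = snd i' ↔ i = i' := by
  simp [Fin.ext_iff]

theorem fst_ne_snd (i i' : Fin ℓ) : fst i ≠ snd i' := by
  simp only [ne_eq, Fin.ext_iff, fst_val, snd_val]; omega

theorem exists_eq_fst_or_eq_snd (p : Fin (2 * ℓ)) : ∃ i : Fin ℓ, p = fst i ∨ p = snd i := by
  refine ⟨⟨p.val / 2, by omega⟩, ?_⟩
  simp only [Fin.ext_iff, fst_val, snd_val]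
  omega

theorem eq_sum_pairs (x : Fin (2 * ℓ) → F) :
    Qform α ℓ j x = ∑ i : Fin ℓ, if i.val < j then
      α * x (fst i) ^ 2 + x (fst i) * x (snd i) + x (snd i) ^ 2 else x (fst i) * x (snd i) :=
  rfl

theorem polar_eq [CharP F 2] (x y : Fin (2 * ℓ) → F) :
    polar (Qform α ℓ j) x y =
      ∑ i : Fin ℓ, (x (fst i) * y (snd i) + x (snd i) * y (fst i)) := by
  simp only [polar, eq_sum_pairs, ← Finset.sum_sub_distrib, Pi.add_apply]
  refine Finset.sum_congr rfl fun i _ => ?_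
  split_ifs
  · linear_combination
      (α * x (fst i) * y (fst i) + x (snd i) * y (snd i)) * CharTwo.two_eq_zero (R := F)
  · ring

theorem polar_single_snd [CharP F 2] (x : Fin (2 * ℓ) → F) (i : Fin ℓ) :
    polar (Qform α ℓ j) x (Pi.single (snd i) 1) = x (fst i) := by
  rw [polar_eq, Fintype.sum_eq_single i]
  · simp [fst_ne_snd]
  · intro i' hi'
    simp [fst_ne_snd, snd_eq_snd_iff, hi']

theorem polar_single_fst [CharP F 2] (x : Fin (2 * ℓ) → F) (i : Fin ℓ) :
    polar (Qform α ℓ j) x (Pi.single (fst i) 1) = x (snd i) := by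
  rw [polar_eq, Fintype.sum_eq_single i]
  · simp [(fst_ne_snd _ _).symm]
  · intro i' hi'
    simp [(fst_ne_snd _ _).symm, fst_eq_fst_iff, hi']

theorem eq_zero_of_polar_eq_zero [CharP F 2] (hℓ : 0 < ℓ) (hj : 0 < j) {x : Fin (2 * ℓ) → F}
    (hx₀ : x (fst ⟨0, hℓ⟩) = 0) (hQx : Qform α ℓ j x = 0)
    (hpolar : ∀ y, y (fst ⟨0, hℓ⟩) = 0 → polar (Qform α ℓ j) x y = 0) : x = 0 := by
  have hfst : ∀ i, x (fst i) = 0 := fun i => by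
    rw [← polar_single_snd α j x i]
    exact hpolar _ (Pi.single_eq_of_ne (fst_ne_snd _ _) _)
  have hsnd : ∀ i : Fin ℓ, i.val ≠ 0 → x (snd i) = 0 := fun i hi => by
    rw [← polar_single_fst α j x i]
    exact hpolar _ (Pi.single_eq_of_ne (by simp [Fin.ext_iff, eq_comm, hi]) _)
  have hQx' : Qform α ℓ j x = x (snd ⟨0, hℓ⟩) ^ 2 := by
    rw [eq_sum_pairs, Fintype.sum_eq_single ⟨0, hℓ⟩]
    · simp [hj, hx₀]
    · intro i hi
      simp [hfst, hsnd i (by simpa [Fin.ext_iff] using hi)]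
  have hx₁ : x (snd ⟨0, hℓ⟩) = 0 := pow_eq_zero_iff two_ne_zero |>.mp (hQx' ▸ hQx)
  funext p
  obtain ⟨i, rfl | rfl⟩ := exists_eq_fst_or_eq_snd p
  · exact hfst i
  · by_cases hi : i.val = 0
    · obtain rfl : i = ⟨0, hℓ⟩ := Fin.ext hi
      exact hx₁
    · exact hsnd i hi

end Qform

theorem stmt8 (F4 : Type*) [Field F4] [Fintype F4] (hc : Fintype.card F4 = 4)
    (α : F4)
    (ℓ j : ℕ) (hℓ : 1 ≤ ℓ) (hj : 1 ≤ j)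
    -- `emb w` is the vector (0, w₂, w₃, …, w_{2ℓ}) of 𝔽₄^{2ℓ} obtained by prepending 0 to w
    (emb : (Fin (2 * ℓ - 1) → F4) → (Fin (2 * ℓ) → F4))
    (hemb : ∀ w i, emb w i = if h : i.val = 0 then 0 else w ⟨i.val - 1, by have := i.isLt; omega⟩)
    -- Q'_{ℓ,j}(x₂,…,x_{2ℓ}) = Q_{ℓ,j}(0, x₂, …, x_{2ℓ})
    (Q' : (Fin (2 * ℓ - 1) → F4) → F4) (hQ' : ∀ w, Q' w = Qform α ℓ j (emb w))
    (B' : (Fin (2 * ℓ - 1) → F4) → (Fin (2 * ℓ - 1) → F4) → F4)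
    (hB' : ∀ u v, B' u v = Q' (u + v) - Q' u - Q' v) :
    -- Q'_{ℓ,j} is nonsingular
    ∀ w : Fin (2 * ℓ - 1) → F4, Q' w = 0 →
      (∀ v : Fin (2 * ℓ - 1) → F4, B' w v = 0) → w = 0 := by
  intro w hQ hB
  have : CharP F4 2 := charP_two_of_card_eq_two_pow (n := 1) hc
  obtain rfl : emb = prependZero := funext fun w => funext (hemb w)
  refine prependZero_eq_zero (Qform.eq_zero_of_polar_eq_zero α j hℓ hj (by simp [prependZero])
    (hQ' w ▸ hQ) fun y hy => ?_)
  obtain ⟨v, rfl⟩ :=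
    exists_prependZero_eq (y := y) fun i hi => (congrArg y (Fin.ext hi)).trans hy
  simpa [polar, hB', hQ', prependZero_add] using hB v
end

section
/- Let ℓ ≥ 2 and 1 ≤ j ≤ ℓ, and let w = (w₁, w₂, …, w_{2ℓ}) ∈ 𝔽₄^{2ℓ} with w₂ ≠ 0. Then χ_w(O₀) = −1 + 4^{ℓ−1} or χ_w(O₀) = −1 − 4^{ℓ−1}. -/
open scoped Classical in
/-- The value `(-1)^{tr(t)} ∈ ℂ`, where `tr : 𝔽₄ → 𝔽₂`, `tr(t) = t + t²`, is the trace map. -/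
noncomputable def chi4 {F4 : Type*} [Field F4] (t : F4) : ℂ :=
  if t + t ^ 2 = 0 then 1 else -1

/-- The character sum `χ_w(S) = Σ_{v ∈ S} (-1)^{tr(Σ_i w_i v_i)}`. -/
noncomputable def chiSum {F4 : Type*} [Field F4] {m : ℕ} (w : Fin m → F4)
    (S : Set (Fin m → F4)) : ℂ :=
  ∑ᶠ v ∈ S, chi4 (∑ i, w i * v i)

/-!
With `x₁ = 0`, the first block of `Q_{ℓ,j}` (elliptic, as `j ≥ 1`) reduces to `x₂²`, so `Q = 0`
determines `x₂` as the square root of `Q'(x')`, where `Q'` is the form on the remaining `ℓ - 1`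
blocks. The trace character is Frobenius invariant, so `χ(w₂ x₂) = χ(w₂² Q'(x'))`, and
`χ_w(O₀) + 1` (the `1` accounts for `x = 0`) is the Weil sum of `w₂² Q'` plus a linear form. That
sum factors over the blocks, and every factor is `±4`: its square is `16`, because the polar form
of each block is the nondegenerate pairing `x y' + y x'`.
-/

open Finset

lemma AddChar.map_sum_eq_prod {A M ι : Type*} [AddCommMonoid A] [CommMonoid M] (ψ : AddChar A M)
    (s : Finset ι) (f : ι → A) : ψ (∑ i ∈ s, f i) = ∏ i ∈ s, ψ (f i) := by
  induction s using Finset.cons_induction with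
  | empty => simp
  | cons a s ha ih => rw [sum_cons, prod_cons, AddChar.map_add_eq_mul, ih]

lemma AddChar.sum_mul_add_mul {F R : Type*} [Field F] [Fintype F] [DecidableEq F] [CommRing R]
    [IsDomain R] {ψ : AddChar F R} (hψ : ψ.IsPrimitive) (a b : F) :
    ∑ r : F × F, ψ (r.1 * a + r.2 * b) = if a = 0 ∧ b = 0 then (Fintype.card F : R) ^ 2 else 0 := by
  simp_rw [Fintype.sum_prod_type, AddChar.map_add_eq_mul, ← mul_sum, ← sum_mul,
    AddChar.sum_mulShift _ hψ]
  by_cases ha : a = 0 <;> by_cases hb : b = 0 <;> simp [ha, hb, sq]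

lemma AddChar.mul_self_eq_one_of_charTwo {F R : Type*} [Ring F] [CharP F 2] [CommMonoid R]
    (ψ : AddChar F R) (x : F) : ψ x * ψ x = 1 := by
  rw [← AddChar.map_add_eq_mul, CharTwo.add_self_eq_zero, AddChar.map_zero_eq_one]

section CharTwo

variable {F R : Type*} [Field F] [Fintype F] [DecidableEq F] [CharP F 2] [CommRing R]
  {ψ : AddChar F R}

lemma AddChar.sum_ite_sq_add_eq_zero (hψ : ∀ x, ψ (x ^ 2) = ψ x) (t v s : F) :
    ∑ b, (if b ^ 2 + t = 0 then ψ (v * b + s) else 0) = ψ (v ^ 2 * t + s) := by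
  have hfrob (b : F) : ψ (v * b + s) = ψ (v ^ 2 * b ^ 2 + s) := by
    rw [AddChar.map_add_eq_mul, AddChar.map_add_eq_mul, ← hψ (v * b), mul_pow]
  have hsq : Function.Bijective fun x : F => x ^ 2 := bijective_frobenius F 2
  simp_rw [hfrob]
  rw [Fintype.sum_bijective _ hsq _ (fun x => if x + t = 0 then ψ (v ^ 2 * x + s) else 0)
    fun b => rfl]
  simp_rw [add_eq_zero_iff_eq_neg, CharTwo.neg_eq, sum_ite_eq', mem_univ, if_true]

/-- As `q 0 (0, b) = b ^ 2`, the constraint determines `b` as a square root, which the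
Frobenius-invariant `ψ` does not see. -/
lemma AddChar.sum_ite_first_block (hψ : ∀ x, ψ (x ^ 2) = ψ x) {n : ℕ}
    (q L : Fin (n + 1) → F × F → F) (v : F) (hq : ∀ b, q 0 (0, b) = b ^ 2)
    (hL : ∀ b, L 0 (0, b) = v * b) :
    ∑ y : Fin (n + 1) → F × F,
        (if (y 0).1 = 0 ∧ ∑ i, q i (y i) = 0 then ψ (∑ i, L i (y i)) else 0) =
      ∑ y : Fin n → F × F, ψ (v ^ 2 * ∑ i, q i.succ (y i) + ∑ i, L i.succ (y i)) := by
  rw [← (Fin.consEquiv fun _ => F × F).sum_comp, Fintype.sum_prod_type, sum_comm]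
  refine sum_congr rfl fun y _ => ?_
  simp only [Fin.consEquiv_apply, Fin.sum_univ_succ, Fin.cons_zero, Fin.cons_succ]
  rw [Fintype.sum_prod_type, sum_comm]
  simp only [ite_and, sum_ite_eq', mem_univ, if_true, hq, hL]
  exact AddChar.sum_ite_sq_add_eq_zero hψ _ _ _

variable [IsDomain R]

/-- Shifting the summation variable turns `S ^ 2` into a sum over characters of the polar form,
which vanishes unless `p = 0`. -/
lemma AddChar.sum_sq_of_polar (hψ : ψ.IsPrimitive) {c : F} (hc : c ≠ 0) (f : F × F → F)
    (hf : ∀ p r, f (p + r) = f p + f r + c * (p.1 * r.2 + p.2 * r.1)) :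
    (∑ p, ψ (f p)) ^ 2 = (Fintype.card F : R) ^ 2 := by
  have hf0 : f 0 = 0 := by simpa using hf 0 0
  have hshift : ∀ r p, ψ (f r) * ψ (f (p + r)) =
      ψ (f p) * ψ (r.1 * (c * p.2) + r.2 * (c * p.1)) := by
    intro r p
    rw [hf, AddChar.map_add_eq_mul, AddChar.map_add_eq_mul,
      show c * (p.1 * r.2 + p.2 * r.1) = r.1 * (c * p.2) + r.2 * (c * p.1) by ring]
    linear_combination (ψ (f p) * ψ (r.1 * (c * p.2) + r.2 * (c * p.1))) *
      ψ.mul_self_eq_one_of_charTwo (f r)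
  calc (∑ p, ψ (f p)) ^ 2 = ∑ r, ∑ p, ψ (f r) * ψ (f (p + r)) := by
        rw [sq, sum_mul_sum]
        exact sum_congr rfl fun r _ =>
          (Fintype.sum_equiv (Equiv.addRight r) _ (fun p => ψ (f r) * ψ (f p)) fun _ => rfl).symm
    _ = ∑ p, ψ (f p) * ∑ r : F × F, ψ (r.1 * (c * p.2) + r.2 * (c * p.1)) := by
        simp_rw [hshift, mul_sum]
        exact sum_comm
    _ = (Fintype.card F : R) ^ 2 := by
        simp_rw [AddChar.sum_mul_add_mul hψ, mul_eq_zero, hc, false_or]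
        rw [Fintype.sum_eq_single 0 fun p hp => by
          rw [if_neg fun h => hp (Prod.ext h.2 h.1), mul_zero]]
        simp [hf0]

lemma AddChar.sum_pi_sq_of_polar {ι : Type*} [Fintype ι] [DecidableEq ι] (hψ : ψ.IsPrimitive)
    {c : F} (hc : c ≠ 0) (f : ι → F × F → F)
    (hf : ∀ i p r, f i (p + r) = f i p + f i r + c * (p.1 * r.2 + p.2 * r.1)) :
    (∑ y : ι → F × F, ψ (∑ i, f i (y i))) ^ 2 =
      ((Fintype.card F : R) ^ Fintype.card ι) ^ 2 := by
  simp_rw [AddChar.map_sum_eq_prod]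
  rw [← Fintype.prod_sum fun i p => ψ (f i p), ← prod_pow]
  simp_rw [AddChar.sum_sq_of_polar hψ hc (f _) (hf _), prod_const, card_univ, pow_right_comm]

end CharTwo

section FieldOfFour

variable {F : Type*} [Field F] [Fintype F]

lemma charP_two_of_card_eq_four (hF : Fintype.card F = 4) : CharP F 2 := by
  refine CharTwo.of_one_ne_zero_of_two_eq_zero one_ne_zero ?_
  have h := FiniteField.cast_card_eq_zero F
  rw [hF, show ((4 : ℕ) : F) = 2 * 2 by norm_num] at h
  exact mul_self_eq_zero.mp h

lemma self_add_sq_eq_zero_or_one (hF : Fintype.card F = 4) (t : F) : t + t ^ 2 = 0 ∨ t + t ^ 2 = 1 := by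
  have := charP_two_of_card_eq_four hF
  have h4 : t ^ 4 = t := hF ▸ FiniteField.pow_card t
  refine IsIdempotentElem.iff_eq_zero_or_one.mp (?_ : (t + t ^ 2) * (t + t ^ 2) = t + t ^ 2)
  linear_combination h4 + t ^ 3 * CharTwo.two_eq_zero (R := F)

lemma chi4_add (hF : Fintype.card F = 4) (s t : F) : chi4 (s + t) = chi4 s * chi4 t := by
  have := charP_two_of_card_eq_four hF
  have htr : s + t + (s + t) ^ 2 = (s + s ^ 2) + (t + t ^ 2) := by rw [CharTwo.add_sq]; ring
  unfold chi4
  rw [htr]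
  rcases self_add_sq_eq_zero_or_one hF s with hs | hs <;>
    rcases self_add_sq_eq_zero_or_one hF t with ht | ht <;>
    simp [hs, ht, CharTwo.add_self_eq_zero]

noncomputable def traceChar (hF : Fintype.card F = 4) : AddChar F ℂ where
  toFun := chi4
  map_zero_eq_one' := by simp [chi4]
  map_add_eq_mul' := chi4_add hF

lemma traceChar_apply (hF : Fintype.card F = 4) (t : F) : traceChar hF t = chi4 t := rfl

lemma traceChar_sq (hF : Fintype.card F = 4) (t : F) : traceChar hF (t ^ 2) = traceChar hF t := by
  have h4 : t ^ 4 = t := hF ▸ FiniteField.pow_card t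
  rw [traceChar_apply, traceChar_apply, chi4, chi4, ← pow_mul, h4, add_comm]

lemma traceChar_isPrimitive (hF : Fintype.card F = 4) : (traceChar hF).IsPrimitive := by
  classical
  have := charP_two_of_card_eq_four hF
  refine AddChar.IsPrimitive.of_ne_one fun h => ?_
  obtain ⟨t, -, ht⟩ := exists_mem_notMem_of_card_lt_card (s := ({0, 1} : Finset F)) (t := univ)
    ((card_le_two).trans_lt (by simp [hF]))
  have htr : t + t ^ 2 ≠ 0 := by
    rw [show t + t ^ 2 = t * (t - 1) by linear_combination t * CharTwo.two_eq_zero (R := F)]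
    simp_all [sub_eq_zero]
  have := DFunLike.congr_fun h t
  norm_num [traceChar_apply, chi4, htr] at this

end FieldOfFour

section Pairing

variable {β : Type*} {ℓ : ℕ}

def finPairEquiv (ℓ : ℕ) : Fin ℓ × Fin 2 ≃ Fin (2 * ℓ) :=
  finProdFinEquiv.trans (finCongr (Nat.mul_comm ℓ 2))

lemma finPairEquiv_apply (i : Fin ℓ) (k : Fin 2) :
    finPairEquiv ℓ (i, k) = ⟨2 * i + k, by omega⟩ := by
  ext
  simp [finPairEquiv, add_comm]

lemma Fin.sum_univ_two_mul {M : Type*} [AddCommMonoid M] (g : Fin (2 * ℓ) → M) :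
    ∑ k, g k = ∑ i : Fin ℓ, (g ⟨2 * i, by omega⟩ + g ⟨2 * i + 1, by omega⟩) := by
  rw [← (finPairEquiv ℓ).sum_comp, Fintype.sum_prod_type]
  simp [Fin.sum_univ_two, finPairEquiv_apply]

def pairEquiv (β : Type*) (ℓ : ℕ) : (Fin (2 * ℓ) → β) ≃ (Fin ℓ → β × β) :=
  ((finPairEquiv ℓ).symm.arrowCongr (Equiv.refl β)).trans
    ((Equiv.curry _ _ _).trans (Equiv.piCongrRight fun _ => finTwoArrowEquiv β))

lemma pairEquiv_apply (x : Fin (2 * ℓ) → β) (i : Fin ℓ) :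
    pairEquiv β ℓ x i = (x ⟨2 * i, by omega⟩, x ⟨2 * i + 1, by omega⟩) := by
  simp [pairEquiv, finPairEquiv_apply]

end Pairing

section QuadraticForm

variable {F : Type*} [Field F]

def blockForm (α : F) (j i : ℕ) (p : F × F) : F :=
  if i < j then α * p.1 ^ 2 + p.1 * p.2 + p.2 ^ 2 else p.1 * p.2

lemma Qform_eq_sum_blockForm (α : F) (ℓ j : ℕ) (x : Fin (2 * ℓ) → F) :
    Qform α ℓ j x = ∑ i : Fin ℓ, blockForm α j i (pairEquiv F ℓ x i) := by
  simp only [Qform, blockForm, pairEquiv_apply]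

lemma blockForm_add [CharP F 2] (α : F) (j i : ℕ) (p r : F × F) :
    blockForm α j i (p + r) = blockForm α j i p + blockForm α j i r + (p.1 * r.2 + p.2 * r.1) := by
  unfold blockForm
  split_ifs <;> simp only [Prod.fst_add, Prod.snd_add, CharTwo.add_sq] <;> ring

lemma blockForm_zero_fst (α : F) {j : ℕ} (hj : 0 < j) (b : F) : blockForm α j 0 (0, b) = b ^ 2 := by
  simp [blockForm, hj]

variable {R : Type*} [Fintype F] [DecidableEq F] [CharP F 2] [CommRing R] {ψ : AddChar F R}

lemma sum_ite_Qform_eq (hψ : ∀ x, ψ (x ^ 2) = ψ x) (α : F) {n j : ℕ} (hj : 0 < j)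
    (w : Fin (2 * (n + 1)) → F) :
    ∑ x, (if x ⟨0, by omega⟩ = 0 ∧ Qform α (n + 1) j x = 0 then ψ (∑ i, w i * x i) else 0) =
      ∑ y : Fin n → F × F, ψ (∑ i, (w ⟨1, by omega⟩ ^ 2 * blockForm α j i.succ (y i) +
        ((pairEquiv F (n + 1) w i.succ).1 * (y i).1 +
          (pairEquiv F (n + 1) w i.succ).2 * (y i).2))) := by
  set u := pairEquiv F (n + 1) w
  calc _ = ∑ y : Fin (n + 1) → F × F,
        if (y 0).1 = 0 ∧ ∑ i : Fin (n + 1), blockForm α j i (y i) = 0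
        then ψ (∑ i, ((u i).1 * (y i).1 + (u i).2 * (y i).2)) else 0 := by
        refine Fintype.sum_equiv (pairEquiv F (n + 1)) _ _ fun x => ?_
        simp only [Qform_eq_sum_blockForm, Fin.sum_univ_two_mul (fun k => w k * x k), u,
          pairEquiv_apply]
        rfl
    _ = _ := by
        rw [AddChar.sum_ite_first_block hψ (fun i => blockForm α j i)
          (fun i p => (u i).1 * p.1 + (u i).2 * p.2) (u 0).2 (blockForm_zero_fst α hj)
          (fun b => by simp)]
        simp only [mul_sum, ← sum_add_distrib]
        rfl

lemma sum_ite_Qform_sq [IsDomain R] (hψ : ψ.IsPrimitive) (hψ_sq : ∀ x, ψ (x ^ 2) = ψ x) (α : F)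
    {n j : ℕ} (hj : 0 < j) (w : Fin (2 * (n + 1)) → F) (hw : w ⟨1, by omega⟩ ≠ 0) :
    (∑ x, (if x ⟨0, by omega⟩ = 0 ∧ Qform α (n + 1) j x = 0 then ψ (∑ i, w i * x i) else 0)) ^ 2 =
      ((Fintype.card F : R) ^ n) ^ 2 := by
  set u := pairEquiv F (n + 1) w
  have := AddChar.sum_pi_sq_of_polar hψ (pow_ne_zero 2 hw)
    (fun (i : Fin n) p => w ⟨1, by omega⟩ ^ 2 * blockForm α j i.succ p +
      ((u i.succ).1 * p.1 + (u i.succ).2 * p.2))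
    fun i p r => by simp only [blockForm_add, Prod.fst_add, Prod.snd_add]; ring
  rwa [Fintype.card_fin, ← sum_ite_Qform_eq hψ_sq α hj w] at this

end QuadraticForm

lemma chiSum_eq_sum_ite_sub_one {F : Type*} [Field F] [Fintype F] {m : ℕ} (w : Fin m → F)
    (S : Set (Fin m → F)) (P : (Fin m → F) → Prop) [DecidablePred P]
    (hS : ∀ x, x ∈ S ↔ x ≠ 0 ∧ P x) (hP : P 0) :
    chiSum w S = ∑ x, (if P x then chi4 (∑ i, w i * x i) else 0) - 1 := by
  classical
  rw [chiSum, finsum_mem_def, finsum_eq_sum_of_fintype, Fintype.sum_eq_add_sum_compl 0,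
    Fintype.sum_eq_add_sum_compl (0 : Fin m → F) fun x => if P x then _ else _]
  simp only [Set.indicator_apply, hS, ne_eq, not_true_eq_false, false_and, if_false, hP, if_true,
    Pi.zero_apply, mul_zero, sum_const_zero, zero_add]
  rw [show chi4 (0 : F) = 1 by simp [chi4], add_sub_cancel_left]
  refine sum_congr rfl fun x hx => ?_
  rw [mem_compl, mem_singleton] at hx
  simp only [hx, not_false_eq_true, true_and]

theorem stmt11 (F4 : Type*) [Field F4] [Fintype F4] (hc : Fintype.card F4 = 4)
    (α : F4)
    (ℓ j : ℕ) (hℓ : 2 ≤ ℓ) (hj : 1 ≤ j)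
    (Z : Set (Fin (2 * ℓ) → F4)) (hZ : Z = {x | x ≠ 0 ∧ Qform α ℓ j x = 0})
    (O₀ : Set (Fin (2 * ℓ) → F4)) (hO₀ : O₀ = {x ∈ Z | x ⟨0, by omega⟩ = 0})
    (w : Fin (2 * ℓ) → F4) (hw : w ⟨1, by omega⟩ ≠ 0) :
    chiSum w O₀ = -1 + 4 ^ (ℓ - 1) ∨ chiSum w O₀ = -1 - 4 ^ (ℓ - 1) := by
  classical
  have := charP_two_of_card_eq_four hc
  obtain ⟨n, rfl⟩ : ∃ n, ℓ = n + 1 := ⟨ℓ - 1, by omega⟩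
  have hO := chiSum_eq_sum_ite_sub_one w O₀
    (fun x => x ⟨0, by omega⟩ = 0 ∧ Qform α (n + 1) j x = 0)
    (fun x => by simp only [hO₀, hZ, Set.mem_ofPred_eq]; tauto) ⟨rfl, by simp [Qform]⟩
  have hweil := sum_ite_Qform_sq (traceChar_isPrimitive hc) (traceChar_sq hc) α hj w hw
  rw [hc, sq_eq_sq_iff_eq_or_eq_neg] at hweil
  simp only [traceChar_apply] at hweil
  rw [hO, Nat.add_sub_cancel]
  push_cast at hweil
  rcases hweil with h | h
  · left; rw [h]; ring
  · right; rw [h]; ring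
end
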